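/- arXiv:2603.22924 — 8 statements merged into one kernel-verified Lean document; each statement's English description precedes it below -/
import Mathlib

section
/- Let A be an n×n real matrix with nonnegative entries whose spectral radius satisfies ρ(A) ≥ 1 (A is not Schur stable), and let B be n×m and C be p×n real matrices. Then there exist no matrices K (m×n) and L (n×p) such that the extended closed-loop matrix M = [[A, BK], [LC, A − LC + BK]] (governing the joint dynamics of the state x and a Luenberger observer x̂ with feedback u = K x̂) has all entries nonnegative (equivalently, leaves the nonnegative orthant ℝ^{2n}_+ invariant) and is Schur stable, i.e. ρ(M) < 1. -/
open Matrix

attribute [local instance] Matrix.linftyOpNormedRing Matrix.linftyOpNormedAlgebra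

lemma entry_pow_nonneg {ι : Type*} [Fintype ι] [DecidableEq ι]
    (X : Matrix ι ι ℝ) (hX : ∀ i j, 0 ≤ X i j) (t : ℕ) :
    ∀ i j, 0 ≤ (X ^ t) i j := by
  induction t with
  | zero =>
    intro i j
    simp only [pow_zero, Matrix.one_apply]
    split <;> norm_num
  | succ t ih =>
    intro i j
    rw [pow_succ, Matrix.mul_apply]
    exact Finset.sum_nonneg fun k _ => mul_nonneg (ih i k) (hX k j)

lemma real_nnnorm_le_of_nonneg {a b : ℝ} (ha : 0 ≤ a) (hab : a ≤ b) : ‖a‖₊ ≤ ‖b‖₊ := by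
  rw [Real.nnnorm_of_nonneg ha, Real.nnnorm_of_nonneg (ha.trans hab)]
  exact hab

open Filter ENNReal in
lemma spectralRadius_submatrix_le {ι κ : Type*} [Fintype ι] [Fintype κ]
    [DecidableEq ι] [DecidableEq κ] (M : Matrix ι ι ℝ) (f : κ → ι)
    (hf : Function.Injective f) (hM : ∀ i j, 0 ≤ M i j) :
    spectralRadius ℂ ((M.submatrix f f).map (algebraMap ℝ ℂ))
      ≤ spectralRadius ℂ (M.map (algebraMap ℝ ℂ)) := by
  set A := M.submatrix f f with hAdef
  have hA : ∀ i j, 0 ≤ A i j := fun i j => hM (f i) (f j)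
  -- powers compare entrywise
  have key : ∀ t : ℕ, ∀ i j, (A ^ t) i j ≤ (M ^ t) (f i) (f j) := by
    intro t
    induction t with
    | zero =>
      intro i j
      simp only [pow_zero, Matrix.one_apply, hf.eq_iff]
      exact le_refl _
    | succ t ih =>
      intro i j
      rw [pow_succ, pow_succ, Matrix.mul_apply, Matrix.mul_apply]
      have h1 : ∑ k, (A ^ t) i k * A k j ≤ ∑ k, (M ^ t) (f i) (f k) * M (f k) (f j) :=
        Finset.sum_le_sum fun k _ =>
          mul_le_mul (ih i k) (le_of_eq rfl) (hA k j)
            (entry_pow_nonneg M hM t (f i) (f k))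
      refine h1.trans ?_
      have h2 : ∑ k : κ, (M ^ t) (f i) (f k) * M (f k) (f j)
          = ∑ l ∈ Finset.univ.image f, (M ^ t) (f i) l * M l (f j) :=
        (Finset.sum_image (f := fun l => (M ^ t) (f i) l * M l (f j))
          (fun a _ b _ h => hf h)).symm
      rw [h2]
      exact Finset.sum_le_sum_of_subset_of_nonneg (Finset.subset_univ _)
        (fun l _ _ => mul_nonneg (entry_pow_nonneg M hM t (f i) l) (hM l (f j)))
  -- norms of powers compare
  have hnorm : ∀ t : ℕ,
      ‖(A ^ t).map (algebraMap ℝ ℂ)‖₊ ≤ ‖(M ^ t).map (algebraMap ℝ ℂ)‖₊ := by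
    intro t
    rw [Matrix.linfty_opNNNorm_def, Matrix.linfty_opNNNorm_def]
    refine Finset.sup_le fun i _ => ?_
    refine le_trans ?_ (Finset.le_sup (Finset.mem_univ (f i)))
    have hrow : ∑ j : κ, ‖((A ^ t).map (algebraMap ℝ ℂ)) i j‖₊
        ≤ ∑ j : κ, ‖((M ^ t).map (algebraMap ℝ ℂ)) (f i) (f j)‖₊ := by
      refine Finset.sum_le_sum fun j _ => ?_
      simp only [Matrix.map_apply, nnnorm_algebraMap']
      exact real_nnnorm_le_of_nonneg (entry_pow_nonneg A hA t i j) (key t i j)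
    refine hrow.trans ?_
    have h2 : ∑ j : κ, ‖((M ^ t).map (algebraMap ℝ ℂ)) (f i) (f j)‖₊
        = ∑ l ∈ Finset.univ.image f, ‖((M ^ t).map (algebraMap ℝ ℂ)) (f i) l‖₊ :=
      (Finset.sum_image (f := fun l => ‖((M ^ t).map (algebraMap ℝ ℂ)) (f i) l‖₊)
        (fun a _ b _ h => hf h)).symm
    rw [h2]
    exact Finset.sum_le_sum_of_subset (Finset.subset_univ _)
  -- Gelfand's formula
  have hmapA : ∀ t : ℕ, (A.map (algebraMap ℝ ℂ)) ^ t = (A ^ t).map (algebraMap ℝ ℂ) := by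
    intro t
    simp only [← RingHom.mapMatrix_apply, ← map_pow]
  have hmapM : ∀ t : ℕ, (M.map (algebraMap ℝ ℂ)) ^ t = (M ^ t).map (algebraMap ℝ ℂ) := by
    intro t
    simp only [← RingHom.mapMatrix_apply, ← map_pow]
  have gA := spectrum.pow_nnnorm_pow_one_div_tendsto_nhds_spectralRadius
    (A.map (algebraMap ℝ ℂ))
  have gM := spectrum.pow_nnnorm_pow_one_div_tendsto_nhds_spectralRadius
    (M.map (algebraMap ℝ ℂ))
  refine le_of_tendsto_of_tendsto' gA gM fun t => ?_
  rw [hmapA, hmapM]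
  exact ENNReal.rpow_le_rpow (by exact_mod_cast hnorm t)
    (by positivity)

/-- A real square matrix is Schur stable if its spectral radius (computed over ℂ) is
strictly less than one. -/
def IsSchur {ι : Type*} [Fintype ι] [DecidableEq ι] (M : Matrix ι ι ℝ) : Prop :=
  spectralRadius ℂ (M.map (algebraMap ℝ ℂ)) < 1

/-- **Impossibility of stabilization by a positive Luenberger observer**
(Ait Rami–Tadeo, Lemma 4.1). If `A ≥ 0` is not Schur stable, then there are no gains
`K`, `L` such that the extended closed-loop matrix
`M = [[A, BK], [LC, A − LC + BK]]` is entrywise nonnegative and Schur stable. -/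
theorem no_stabilizing_positive_observer {n m p : ℕ}
    (A : Matrix (Fin n) (Fin n) ℝ) (B : Matrix (Fin n) (Fin m) ℝ)
    (C : Matrix (Fin p) (Fin n) ℝ)
    (hA : ∀ i j, 0 ≤ A i j)
    (hnotSchur : 1 ≤ spectralRadius ℂ (A.map (algebraMap ℝ ℂ))) :
    ¬ ∃ (K : Matrix (Fin m) (Fin n) ℝ) (L : Matrix (Fin n) (Fin p) ℝ),
        (∀ i j, 0 ≤ Matrix.fromBlocks A (B * K) (L * C) (A - L * C + B * K) i j) ∧
        IsSchur (Matrix.fromBlocks A (B * K) (L * C) (A - L * C + B * K)) := by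
  rintro ⟨K, L, hpos, hschur⟩
  set M := Matrix.fromBlocks A (B * K) (L * C) (A - L * C + B * K) with hM
  have hsub : M.submatrix Sum.inl Sum.inl = A := by
    ext i j; simp [hM]
  have := spectralRadius_submatrix_le M Sum.inl Sum.inl_injective hpos
  rw [hsub] at this
  exact absurd (lt_of_le_of_lt (hnotSchur.trans this) hschur) (lt_irrefl _)
end

section
/- Let A (n×n), B (n×m), C (p×n), K̄, K̲ (m×n), L̄, L̲ (n×p) be real matrices. The set X = {(x, x̄, x̲) ∈ ℝ^{3n} : 0 ≤ x̲ ≤ x ≤ x̄ entrywise} is invariant under the linear map given by the extended closed-loop matrix T = [[A, BK̄, BK̲], [L̄C, A − L̄C + BK̄, BK̲], [L̲C, BK̄, A − L̲C + BK̲]] if and only if the following six entrywise inequalities hold: A + B(K̄ + K̲) ≥ 0, A + BK̄ ≥ 0, BK̄ ≥ 0, A − L̄C ≥ 0, A − L̲C ≥ 0, and BK̄ + L̲C ≥ 0. -/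
/-! In the coordinates `(x̲, x − x̲, x̄ − x)` the set `X` becomes the nonnegative orthant and `T`
becomes block upper triangular,
`[[A + B(K̄ + K̲), BK̄ + L̲C, BK̄], [0, A − L̲C, 0], [0, 0, A − L̄C]]`.
A linear map preserves the orthant iff its matrix is entrywise nonnegative, which gives five of
the six conditions; the remaining one is their consequence `A + BK̄ = (A − L̲C) + (BK̄ + L̲C)`. -/

open Matrix

/-- The extended closed-loop map `(x, x̄, x̲) ↦ T (x, x̄, x̲)` with
`T = [[A, BK̄, BK̲], [L̄C, A − L̄C + BK̄, BK̲], [L̲C, BK̄, A − L̲C + BK̲]]`. -/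
def Tmap {n m p : ℕ}
    (A : Matrix (Fin n) (Fin n) ℝ) (B : Matrix (Fin n) (Fin m) ℝ)
    (C : Matrix (Fin p) (Fin n) ℝ)
    (Ku Kl : Matrix (Fin m) (Fin n) ℝ) (Lu Ll : Matrix (Fin n) (Fin p) ℝ)
    (z : (Fin n → ℝ) × (Fin n → ℝ) × (Fin n → ℝ)) :
    (Fin n → ℝ) × (Fin n → ℝ) × (Fin n → ℝ) :=
  (A *ᵥ z.1 + (B * Ku) *ᵥ z.2.1 + (B * Kl) *ᵥ z.2.2,
   (Lu * C) *ᵥ z.1 + (A - Lu * C + B * Ku) *ᵥ z.2.1 + (B * Kl) *ᵥ z.2.2,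
   (Ll * C) *ᵥ z.1 + (B * Ku) *ᵥ z.2.1 + (A - Ll * C + B * Kl) *ᵥ z.2.2)

/-- The order-preserving set `X = {(x, x̄, x̲) : 0 ≤ x̲ ≤ x ≤ x̄ entrywise}`. -/
def orderSet (n : ℕ) : Set ((Fin n → ℝ) × (Fin n → ℝ) × (Fin n → ℝ)) :=
  {z | (∀ i, 0 ≤ z.2.2 i) ∧ (∀ i, z.2.2 i ≤ z.1 i) ∧ (∀ i, z.1 i ≤ z.2.1 i)}

namespace Matrix

variable {ι κ R : Type*} [Fintype κ] [Semiring R] [PartialOrder R] [IsOrderedRing R]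

theorem mulVec_nonneg {M : Matrix ι κ R} (hM : ∀ i j, 0 ≤ M i j) {v : κ → R} (hv : 0 ≤ v) :
    0 ≤ M *ᵥ v :=
  fun i => Finset.sum_nonneg fun j _ => mul_nonneg (hM i j) (hv j)

theorem forall_mulVec_nonneg_iff [DecidableEq κ] {M : Matrix ι κ R} :
    (∀ v, 0 ≤ v → 0 ≤ M *ᵥ v) ↔ ∀ i j, 0 ≤ M i j := by
  refine ⟨fun h i j => ?_, fun hM _ => mulVec_nonneg hM⟩
  simpa [mulVec_single_one] using h (Pi.single j 1) (Pi.single_nonneg.2 zero_le_one) i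

theorem forall_add_add_mulVec_nonneg_iff {κ₁ κ₂ κ₃ : Type*}
    [Fintype κ₁] [Fintype κ₂] [Fintype κ₃] [DecidableEq κ₁] [DecidableEq κ₂] [DecidableEq κ₃]
    {M₁ : Matrix ι κ₁ R} {M₂ : Matrix ι κ₂ R} {M₃ : Matrix ι κ₃ R} :
    (∀ u v w, 0 ≤ u → 0 ≤ v → 0 ≤ w → 0 ≤ M₁ *ᵥ u + M₂ *ᵥ v + M₃ *ᵥ w) ↔
      (∀ i j, 0 ≤ M₁ i j) ∧ (∀ i j, 0 ≤ M₂ i j) ∧ (∀ i j, 0 ≤ M₃ i j) := by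
  refine ⟨fun h => ⟨?_, ?_, ?_⟩, fun ⟨h₁, h₂, h₃⟩ u v w hu hv hw => ?_⟩
  · exact forall_mulVec_nonneg_iff.1 fun u hu => by simpa using h u 0 0 hu le_rfl le_rfl
  · exact forall_mulVec_nonneg_iff.1 fun v hv => by simpa using h 0 v 0 le_rfl hv le_rfl
  · exact forall_mulVec_nonneg_iff.1 fun w hw => by simpa using h 0 0 w le_rfl le_rfl hw
  · exact add_nonneg (add_nonneg (mulVec_nonneg h₁ hu) (mulVec_nonneg h₂ hv)) (mulVec_nonneg h₃ hw)

end Matrix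

theorem mem_orderSet_iff {n : ℕ} {z : (Fin n → ℝ) × (Fin n → ℝ) × (Fin n → ℝ)} :
    z ∈ orderSet n ↔ 0 ≤ z.2.2 ∧ 0 ≤ z.1 - z.2.2 ∧ 0 ≤ z.2.1 - z.1 := by
  simp only [orderSet, Set.mem_ofPred_eq, Pi.le_def, Pi.zero_apply, sub_nonneg]

section Tmap

variable {n m p : ℕ} (A : Matrix (Fin n) (Fin n) ℝ) (B : Matrix (Fin n) (Fin m) ℝ)
  (C : Matrix (Fin p) (Fin n) ℝ) (Ku Kl : Matrix (Fin m) (Fin n) ℝ)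
  (Lu Ll : Matrix (Fin n) (Fin p) ℝ) (z : (Fin n → ℝ) × (Fin n → ℝ) × (Fin n → ℝ))

theorem Tmap_lower :
    (Tmap A B C Ku Kl Lu Ll z).2.2 = (A + B * (Ku + Kl)) *ᵥ z.2.2 +
      (B * Ku + Ll * C) *ᵥ (z.1 - z.2.2) + (B * Ku) *ᵥ (z.2.1 - z.1) := by
  simp only [Tmap, add_mulVec, sub_mulVec, mulVec_sub, Matrix.mul_add]
  abel

theorem Tmap_state_sub_lower :
    (Tmap A B C Ku Kl Lu Ll z).1 - (Tmap A B C Ku Kl Lu Ll z).2.2 =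
      (A - Ll * C) *ᵥ (z.1 - z.2.2) := by
  simp only [Tmap, add_mulVec, sub_mulVec, mulVec_sub]
  abel

theorem Tmap_upper_sub_state :
    (Tmap A B C Ku Kl Lu Ll z).2.1 - (Tmap A B C Ku Kl Lu Ll z).1 =
      (A - Lu * C) *ᵥ (z.2.1 - z.1) := by
  simp only [Tmap, add_mulVec, sub_mulVec, mulVec_sub]
  abel

theorem Tmap_mem_orderSet_iff :
    Tmap A B C Ku Kl Lu Ll z ∈ orderSet n ↔
      0 ≤ (A + B * (Ku + Kl)) *ᵥ z.2.2 + (B * Ku + Ll * C) *ᵥ (z.1 - z.2.2) +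
        (B * Ku) *ᵥ (z.2.1 - z.1) ∧
      0 ≤ (A - Ll * C) *ᵥ (z.1 - z.2.2) ∧ 0 ≤ (A - Lu * C) *ᵥ (z.2.1 - z.1) := by
  rw [mem_orderSet_iff, Tmap_state_sub_lower, Tmap_upper_sub_state, Tmap_lower]

theorem Tmap_mapsTo_orderSet_iff :
    (∀ z ∈ orderSet n, Tmap A B C Ku Kl Lu Ll z ∈ orderSet n) ↔
      (∀ a d e, 0 ≤ a → 0 ≤ d → 0 ≤ e →
        0 ≤ (A + B * (Ku + Kl)) *ᵥ a + (B * Ku + Ll * C) *ᵥ d + (B * Ku) *ᵥ e) ∧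
      (∀ d, 0 ≤ d → 0 ≤ (A - Ll * C) *ᵥ d) ∧ (∀ e, 0 ≤ e → 0 ≤ (A - Lu * C) *ᵥ e) := by
  simp_rw [Tmap_mem_orderSet_iff, mem_orderSet_iff]
  constructor
  · intro h
    -- every nonnegative `(a, d, e)` comes from the point `(a + d, a + d + e, a)` of `X`
    have hlift : ∀ a d e : Fin n → ℝ, 0 ≤ a → 0 ≤ d → 0 ≤ e →
        0 ≤ (A + B * (Ku + Kl)) *ᵥ a + (B * Ku + Ll * C) *ᵥ d + (B * Ku) *ᵥ e ∧
        0 ≤ (A - Ll * C) *ᵥ d ∧ 0 ≤ (A - Lu * C) *ᵥ e := fun a d e ha hd he => by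
      simpa using h (a + d, a + d + e, a) (by simpa using ⟨ha, hd, he⟩)
    exact ⟨fun a d e ha hd he => (hlift a d e ha hd he).1,
      fun d hd => (hlift 0 d 0 le_rfl hd le_rfl).2.1,
      fun e he => (hlift 0 0 e le_rfl le_rfl he).2.2⟩
  · rintro ⟨h₁, h₂, h₃⟩ z ⟨ha, hd, he⟩
    exact ⟨h₁ _ _ _ ha hd he, h₂ _ hd, h₃ _ he⟩

end Tmap

/-- **Lemma 1.** The set `X` is invariant under the extended closed-loop dynamics `T`
if and only if the six entrywise matrix inequalities hold. -/
theorem orderSet_invariant_iff {n m p : ℕ}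
    (A : Matrix (Fin n) (Fin n) ℝ) (B : Matrix (Fin n) (Fin m) ℝ)
    (C : Matrix (Fin p) (Fin n) ℝ)
    (Ku Kl : Matrix (Fin m) (Fin n) ℝ) (Lu Ll : Matrix (Fin n) (Fin p) ℝ) :
    (∀ z ∈ orderSet n, Tmap A B C Ku Kl Lu Ll z ∈ orderSet n) ↔
    ((∀ i j, 0 ≤ (A + B * (Ku + Kl)) i j) ∧
     (∀ i j, 0 ≤ (A + B * Ku) i j) ∧
     (∀ i j, 0 ≤ (B * Ku) i j) ∧
     (∀ i j, 0 ≤ (A - Lu * C) i j) ∧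
     (∀ i j, 0 ≤ (A - Ll * C) i j) ∧
     (∀ i j, 0 ≤ (B * Ku + Ll * C) i j)) := by
  rw [Tmap_mapsTo_orderSet_iff, forall_add_add_mulVec_nonneg_iff, forall_mulVec_nonneg_iff,
    forall_mulVec_nonneg_iff]
  have hsplit : A + B * Ku = (A - Ll * C) + (B * Ku + Ll * C) := by abel
  constructor
  · rintro ⟨⟨h₁, h₆, h₃⟩, h₅, h₄⟩
    exact ⟨h₁, fun i j => hsplit ▸ add_nonneg (h₅ i j) (h₆ i j), h₃, h₄, h₅, h₆⟩
  · rintro ⟨h₁, -, h₃, h₄, h₅, h₆⟩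
    exact ⟨⟨h₁, h₆, h₃⟩, h₅, h₄⟩
end

section
/- Let A (n×n), B (n×m), C (p×n), K̄, K̲ (m×n), L̄, L̲ (n×p) be real matrices, and let G = [[A + B(K̄ + K̲), BK̄, −BK̲], [0, A − L̄C, 0], [0, 0, A − L̲C]] act on ℝ^{3n}. The cone X_e = {(x, ē, e̲) ∈ ℝ^{3n} : x ≥ 0, ē ≥ 0, 0 ≤ e̲ ≤ x} is invariant under G if and only if the six entrywise inequalities hold: A + B(K̄ + K̲) ≥ 0, A + BK̄ ≥ 0, BK̄ ≥ 0, A − L̄C ≥ 0, A − L̲C ≥ 0, and BK̄ + L̲C ≥ 0. -/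
open Matrix

/-- The error-coordinate closed-loop map `(x, ē, e̲) ↦ G (x, ē, e̲)` with
`G = [[A + B(K̄ + K̲), BK̄, −BK̲], [0, A − L̄C, 0], [0, 0, A − L̲C]]`. -/
def Gmap {n m p : ℕ}
    (A : Matrix (Fin n) (Fin n) ℝ) (B : Matrix (Fin n) (Fin m) ℝ)
    (C : Matrix (Fin p) (Fin n) ℝ)
    (Ku Kl : Matrix (Fin m) (Fin n) ℝ) (Lu Ll : Matrix (Fin n) (Fin p) ℝ)
    (z : (Fin n → ℝ) × (Fin n → ℝ) × (Fin n → ℝ)) :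
    (Fin n → ℝ) × (Fin n → ℝ) × (Fin n → ℝ) :=
  ((A + B * (Ku + Kl)) *ᵥ z.1 + (B * Ku) *ᵥ z.2.1 - (B * Kl) *ᵥ z.2.2,
   (A - Lu * C) *ᵥ z.2.1,
   (A - Ll * C) *ᵥ z.2.2)

/-- The error cone `X_e = {(x, ē, e̲) : x ≥ 0, ē ≥ 0, 0 ≤ e̲ ≤ x entrywise}`. -/
def errorCone (n : ℕ) : Set ((Fin n → ℝ) × (Fin n → ℝ) × (Fin n → ℝ)) :=
  {z | (∀ i, 0 ≤ z.1 i) ∧ (∀ i, 0 ≤ z.2.1 i) ∧ (∀ i, 0 ≤ z.2.2 i) ∧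
       (∀ i, z.2.2 i ≤ z.1 i)}

/-!
In the coordinates `(d, ē, e̲)` with `d = x − e̲` the cone `X_e` becomes the nonnegative orthant
(the constraint `x ≥ 0` is implied by `d ≥ 0` and `e̲ ≥ 0`), and invariance asks that the three
outputs `x' − e̲'`, `ē'`, `e̲'` be nonnegative. Each is a block-linear map of `(d, ē, e̲)`, and a
matrix maps the orthant into itself iff its entries are nonnegative (test on basis vectors).
Expanding `x' − e̲' = (A + B(K̄ + K̲)) d + BK̄ ē + (BK̄ + L̲C) e̲` gives five of the conditions;
the sixth, `A + BK̄ = (BK̄ + L̲C) + (A − L̲C) ≥ 0`, is their consequence.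
-/

section OrthantInvariance

variable {R l m n o : Type*} [Semiring R] [PartialOrder R] [IsOrderedRing R]
  [Fintype m] [Fintype n] [Fintype o]

theorem Matrix.mulVec_nonneg_iff {M : Matrix l m R} :
    (∀ v, 0 ≤ v → 0 ≤ M *ᵥ v) ↔ ∀ i j, 0 ≤ M i j := by
  classical
  constructor
  · intro h i j
    simpa [mulVec_single_one] using h (Pi.single j 1) (Pi.single_nonneg.2 zero_le_one) i
  · intro h v hv i
    exact dotProduct_nonneg_of_nonneg (fun j => h i j) hv

theorem Matrix.mulVec_add_mulVec_add_mulVec_nonneg_iff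
    {P : Matrix l m R} {Q : Matrix l n R} {S : Matrix l o R} :
    (∀ u v w, 0 ≤ u → 0 ≤ v → 0 ≤ w → 0 ≤ P *ᵥ u + Q *ᵥ v + S *ᵥ w) ↔
      (∀ i j, 0 ≤ P i j) ∧ (∀ i j, 0 ≤ Q i j) ∧ (∀ i j, 0 ≤ S i j) := by
  simp only [← Matrix.mulVec_nonneg_iff]
  constructor
  · intro h
    refine ⟨fun u hu => ?_, fun v hv => ?_, fun w hw => ?_⟩
    · simpa using h u 0 0 hu le_rfl le_rfl
    · simpa using h 0 v 0 le_rfl hv le_rfl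
    · simpa using h 0 0 w le_rfl le_rfl hw
  · rintro ⟨hP, hQ, hS⟩ u v w hu hv hw
    exact add_nonneg (add_nonneg (hP u hu) (hQ v hv)) (hS w hw)

end OrthantInvariance

theorem mem_errorCone_iff {n : ℕ} {z : (Fin n → ℝ) × (Fin n → ℝ) × (Fin n → ℝ)} :
    z ∈ errorCone n ↔ 0 ≤ z.1 - z.2.2 ∧ 0 ≤ z.2.1 ∧ 0 ≤ z.2.2 := by
  simp only [errorCone, Set.mem_ofPred_eq, Pi.le_def, Pi.zero_apply, sub_nonneg]
  constructor
  · rintro ⟨-, he, hl, hle⟩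
    exact ⟨hle, he, hl⟩
  · rintro ⟨hle, he, hl⟩
    exact ⟨fun i => (hl i).trans (hle i), he, hl, hle⟩

theorem forall_mem_errorCone_iff {n : ℕ}
    {P : (Fin n → ℝ) × (Fin n → ℝ) × (Fin n → ℝ) → Prop} :
    (∀ z ∈ errorCone n, P z) ↔
      ∀ d eu el : Fin n → ℝ, 0 ≤ d → 0 ≤ eu → 0 ≤ el → P (d + el, eu, el) := by
  constructor
  · intro h d eu el hd he hl
    exact h _ (mem_errorCone_iff.2 ⟨by simpa using hd, he, hl⟩)
  · rintro h ⟨x, eu, el⟩ hz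
    obtain ⟨hd, he, hl⟩ := mem_errorCone_iff.1 hz
    simpa using h (x - el) eu el hd he hl

theorem Gmap_fst_sub_snd_snd {n m p : ℕ}
    (A : Matrix (Fin n) (Fin n) ℝ) (B : Matrix (Fin n) (Fin m) ℝ)
    (C : Matrix (Fin p) (Fin n) ℝ)
    (Ku Kl : Matrix (Fin m) (Fin n) ℝ) (Lu Ll : Matrix (Fin n) (Fin p) ℝ)
    (d eu el : Fin n → ℝ) :
    (Gmap A B C Ku Kl Lu Ll (d + el, eu, el)).1 - (Gmap A B C Ku Kl Lu Ll (d + el, eu, el)).2.2 =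
      (A + B * (Ku + Kl)) *ᵥ d + (B * Ku) *ᵥ eu + (B * Ku + Ll * C) *ᵥ el := by
  simp only [Gmap, mulVec_add, add_mulVec, sub_mulVec, Matrix.mul_add]
  abel

theorem Gmap_mem_errorCone_iff {n m p : ℕ}
    (A : Matrix (Fin n) (Fin n) ℝ) (B : Matrix (Fin n) (Fin m) ℝ)
    (C : Matrix (Fin p) (Fin n) ℝ)
    (Ku Kl : Matrix (Fin m) (Fin n) ℝ) (Lu Ll : Matrix (Fin n) (Fin p) ℝ)
    (d eu el : Fin n → ℝ) :
    Gmap A B C Ku Kl Lu Ll (d + el, eu, el) ∈ errorCone n ↔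
      0 ≤ (A + B * (Ku + Kl)) *ᵥ d + (B * Ku) *ᵥ eu + (B * Ku + Ll * C) *ᵥ el ∧
        0 ≤ (A - Lu * C) *ᵥ eu ∧ 0 ≤ (A - Ll * C) *ᵥ el := by
  rw [mem_errorCone_iff, Gmap_fst_sub_snd_snd]
  rfl

/-- **Lemma 1 in error coordinates.** The cone `X_e` is invariant under `G` if and only if
the six entrywise matrix inequalities hold. -/
theorem errorCone_invariant_iff {n m p : ℕ}
    (A : Matrix (Fin n) (Fin n) ℝ) (B : Matrix (Fin n) (Fin m) ℝ)
    (C : Matrix (Fin p) (Fin n) ℝ)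
    (Ku Kl : Matrix (Fin m) (Fin n) ℝ) (Lu Ll : Matrix (Fin n) (Fin p) ℝ) :
    (∀ z ∈ errorCone n, Gmap A B C Ku Kl Lu Ll z ∈ errorCone n) ↔
    ((∀ i j, 0 ≤ (A + B * (Ku + Kl)) i j) ∧
     (∀ i j, 0 ≤ (A + B * Ku) i j) ∧
     (∀ i j, 0 ≤ (B * Ku) i j) ∧
     (∀ i j, 0 ≤ (A - Lu * C) i j) ∧
     (∀ i j, 0 ≤ (A - Ll * C) i j) ∧
     (∀ i j, 0 ≤ (B * Ku + Ll * C) i j)) := by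
  simp only [forall_mem_errorCone_iff, Gmap_mem_errorCone_iff]
  constructor
  · intro h
    obtain ⟨hM, hBK, hBKLC⟩ := mulVec_add_mulVec_add_mulVec_nonneg_iff.1
      fun d eu el hd he hl => (h d eu el hd he hl).1
    have hLu := mulVec_nonneg_iff.1 fun eu he => (h 0 eu 0 le_rfl he le_rfl).2.1
    have hLl := mulVec_nonneg_iff.1 fun el hl => (h 0 0 el le_rfl le_rfl hl).2.2
    have hsplit : A + B * Ku = (B * Ku + Ll * C) + (A - Ll * C) := by abel
    refine ⟨hM, fun i j => ?_, hBK, hLu, hLl, hBKLC⟩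
    rw [hsplit]
    exact add_nonneg (hBKLC i j) (hLl i j)
  · rintro ⟨hM, -, hBK, hLu, hLl, hBKLC⟩ d eu el hd he hl
    exact ⟨mulVec_add_mulVec_add_mulVec_nonneg_iff.2 ⟨hM, hBK, hBKLC⟩ d eu el hd he hl,
      mulVec_nonneg_iff.2 hLu eu he, mulVec_nonneg_iff.2 hLl el hl⟩
end

section
/- Let A (n×n), B (n×m), C (p×n), K̄, K̲ (m×n), L̄, L̲ (n×p) be real matrices satisfying the six entrywise inequalities A + B(K̄ + K̲) ≥ 0, A + BK̄ ≥ 0, BK̄ ≥ 0, A − L̄C ≥ 0, A − L̲C ≥ 0, and BK̄ + L̲C ≥ 0. Then for every (x, ē, e̲) ∈ ℝ^{3n} with x ≥ 0, ē ≥ 0, and 0 ≤ e̲ ≤ x, the image (x⁺, ē⁺, e̲⁺) = G (x, ē, e̲), where G = [[A + B(K̄ + K̲), BK̄, −BK̲], [0, A − L̄C, 0], [0, 0, A − L̲C]], again satisfies x⁺ ≥ 0, ē⁺ ≥ 0, and 0 ≤ e̲⁺ ≤ x⁺. -/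
open Matrix


private lemma mulVec_nonneg' {n k : ℕ} (M : Matrix (Fin n) (Fin k) ℝ) (v : Fin k → ℝ)
    (hM : ∀ i j, 0 ≤ M i j) (hv : ∀ j, 0 ≤ v j) : ∀ i, 0 ≤ (M *ᵥ v) i := fun i => by
  rw [Matrix.mulVec, dotProduct]
  exact Finset.sum_nonneg fun j _ => mul_nonneg (hM i j) (hv j)

/-- **Sufficiency in Lemma 1.** Under the six entrywise inequalities, the image
`(x⁺, ē⁺, e̲⁺) = G (x, ē, e̲)` of any point with `x ≥ 0`, `ē ≥ 0`, `0 ≤ e̲ ≤ x` again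
satisfies `x⁺ ≥ 0`, `ē⁺ ≥ 0`, `0 ≤ e̲⁺ ≤ x⁺`, where
`G = [[A + B(K̄ + K̲), BK̄, −BK̲], [0, A − L̄C, 0], [0, 0, A − L̲C]]`. -/
theorem errorCone_invariant_of_ineqs {n m p : ℕ}
    (A : Matrix (Fin n) (Fin n) ℝ) (B : Matrix (Fin n) (Fin m) ℝ)
    (C : Matrix (Fin p) (Fin n) ℝ)
    (Ku Kl : Matrix (Fin m) (Fin n) ℝ) (Lu Ll : Matrix (Fin n) (Fin p) ℝ)
    (h1 : ∀ i j, 0 ≤ (A + B * (Ku + Kl)) i j)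
    (h2 : ∀ i j, 0 ≤ (A + B * Ku) i j)
    (h3 : ∀ i j, 0 ≤ (B * Ku) i j)
    (h4 : ∀ i j, 0 ≤ (A - Lu * C) i j)
    (h5 : ∀ i j, 0 ≤ (A - Ll * C) i j)
    (h6 : ∀ i j, 0 ≤ (B * Ku + Ll * C) i j)
    (x eu el : Fin n → ℝ)
    (hx : ∀ i, 0 ≤ x i) (heu : ∀ i, 0 ≤ eu i)
    (hel : ∀ i, 0 ≤ el i) (helx : ∀ i, el i ≤ x i) :
    (∀ i, 0 ≤ ((A + B * (Ku + Kl)) *ᵥ x + (B * Ku) *ᵥ eu - (B * Kl) *ᵥ el) i) ∧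
    (∀ i, 0 ≤ ((A - Lu * C) *ᵥ eu) i) ∧
    (∀ i, 0 ≤ ((A - Ll * C) *ᵥ el) i) ∧
    (∀ i, ((A - Ll * C) *ᵥ el) i ≤
          ((A + B * (Ku + Kl)) *ᵥ x + (B * Ku) *ᵥ eu - (B * Kl) *ᵥ el) i) := by

  have hxe : ∀ i, 0 ≤ (x - el) i := fun i => sub_nonneg.2 (helx i)
  have t1 := mulVec_nonneg' _ _ h1 hxe
  have t2 := mulVec_nonneg' _ _ h2 hel
  have t3 := mulVec_nonneg' _ _ h3 heu
  have t6 := mulVec_nonneg' _ _ h6 hel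
  have id1 : ∀ i, ((A + B * (Ku + Kl)) *ᵥ x + (B * Ku) *ᵥ eu - (B * Kl) *ᵥ el) i
      = ((A + B * (Ku + Kl)) *ᵥ (x - el)) i + ((A + B * Ku) *ᵥ el) i + ((B * Ku) *ᵥ eu) i := by
    intro i
    simp only [Matrix.mulVec_sub, Matrix.add_mulVec, Matrix.mul_add, Pi.add_apply, Pi.sub_apply]
    ring
  have id2 : ∀ i, ((A + B * (Ku + Kl)) *ᵥ x + (B * Ku) *ᵥ eu - (B * Kl) *ᵥ el) i
      - ((A - Ll * C) *ᵥ el) i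
      = ((A + B * (Ku + Kl)) *ᵥ (x - el)) i + ((B * Ku + Ll * C) *ᵥ el) i + ((B * Ku) *ᵥ eu) i := by
    intro i
    simp only [Matrix.mulVec_sub, Matrix.add_mulVec, Matrix.sub_mulVec, Matrix.mul_add,
      Pi.add_apply, Pi.sub_apply]
    ring
  refine ⟨fun i => ?_, mulVec_nonneg' _ _ h4 heu, mulVec_nonneg' _ _ h5 hel, fun i => ?_⟩
  · rw [id1 i]; have := t1 i; have := t2 i; have := t3 i; linarith
  · have := id2 i
    nlinarith [t1 i, t6 i, t3 i]
end

section
/- Let A (n×n), B (n×m), C (p×n), K̄, K̲ (m×n), L̄, L̲ (n×p) be real matrices, and let G = [[A + B(K̄ + K̲), BK̄, −BK̲], [0, A − L̄C, 0], [0, 0, A − L̲C]]. If the cone X_e = {(x, ē, e̲) ∈ ℝ^{3n} : x ≥ 0, ē ≥ 0, 0 ≤ e̲ ≤ x} is invariant under G, then all six entrywise inequalities hold: A + B(K̄ + K̲) ≥ 0, A + BK̄ ≥ 0, BK̄ ≥ 0, A − L̄C ≥ 0, A − L̲C ≥ 0, and BK̄ + L̲C ≥ 0. -/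
open Matrix

/-- **Necessity in Lemma 1.** If the cone `X_e` is invariant under `G`, then the six
entrywise matrix inequalities hold. -/
theorem ineqs_of_errorCone_invariant {n m p : ℕ}
    (A : Matrix (Fin n) (Fin n) ℝ) (B : Matrix (Fin n) (Fin m) ℝ)
    (C : Matrix (Fin p) (Fin n) ℝ)
    (Ku Kl : Matrix (Fin m) (Fin n) ℝ) (Lu Ll : Matrix (Fin n) (Fin p) ℝ)
    (hinv : ∀ z ∈ errorCone n, Gmap A B C Ku Kl Lu Ll z ∈ errorCone n) :
    (∀ i j, 0 ≤ (A + B * (Ku + Kl)) i j) ∧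
    (∀ i j, 0 ≤ (A + B * Ku) i j) ∧
    (∀ i j, 0 ≤ (B * Ku) i j) ∧
    (∀ i j, 0 ≤ (A - Lu * C) i j) ∧
    (∀ i j, 0 ≤ (A - Ll * C) i j) ∧
    (∀ i j, 0 ≤ (B * Ku + Ll * C) i j) := by
  have hsingle : ∀ j i : Fin n, (0:ℝ) ≤ (Pi.single j 1 : Fin n → ℝ) i := by
    intro j i
    rcases eq_or_ne i j with rfl | h
    · simp
    · simp [Pi.single_apply, h]
  have h1 : ∀ j, (Pi.single j 1, (0 : Fin n → ℝ), (0 : Fin n → ℝ)) ∈ errorCone n := by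
    intro j
    exact ⟨hsingle j, fun i => le_refl 0, fun i => le_refl 0, fun i => hsingle j i⟩
  have h2 : ∀ j, ((0 : Fin n → ℝ), Pi.single j 1, (0 : Fin n → ℝ)) ∈ errorCone n := by
    intro j
    exact ⟨fun i => le_refl 0, hsingle j, fun i => le_refl 0, fun i => le_refl 0⟩
  have h3 : ∀ j, (Pi.single j 1, (0 : Fin n → ℝ), Pi.single j 1) ∈ errorCone n := by
    intro j
    exact ⟨hsingle j, fun i => le_refl 0, hsingle j, fun i => le_rfl⟩
  refine ⟨?_, ?_, ?_, ?_, ?_, ?_⟩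
  · intro i j
    have := (hinv _ (h1 j)).1 i
    simpa [Gmap] using this
  · intro i j
    have := (hinv _ (h3 j)).1 i
    have h : (0:ℝ) ≤ (A + B * (Ku + Kl)) i j - (B * Kl) i j := by
      simpa [Gmap] using this
    have e : (A + B * (Ku + Kl)) i j - (B * Kl) i j = (A + B * Ku) i j := by
      simp [Matrix.mul_add, Matrix.add_apply]
      ring
    linarith [e ▸ h]
  · intro i j
    have := (hinv _ (h2 j)).1 i
    simpa [Gmap] using this
  · intro i j
    have := (hinv _ (h2 j)).2.1 i
    simpa [Gmap] using this
  · intro i j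
    have := (hinv _ (h3 j)).2.2.1 i
    simpa [Gmap] using this
  · intro i j
    have hle := (hinv _ (h3 j)).2.2.2 i
    have h : (A - Ll * C) i j ≤ (A + B * (Ku + Kl)) i j - (B * Kl) i j := by
      simpa [Gmap] using hle
    have : (B * Ku + Ll * C) i j = ((A + B * (Ku + Kl)) i j - (B * Kl) i j) - (A - Ll * C) i j := by
      simp [Matrix.mul_add, Matrix.add_apply, Matrix.sub_apply]
      ring
    rw [this]
    linarith
end

section
/- Let A (n×n), B (n×m), C (p×n), K̄, K̲ (m×n), L̄, L̲ (n×p) be real matrices. The extended closed-loop matrix T = [[A, BK̄, BK̲], [L̄C, A − L̄C + BK̄, BK̲], [L̲C, BK̄, A − L̲C + BK̲]] is similar to the block upper-triangular matrix G = [[A + B(K̄ + K̲), BK̄, −BK̲], [0, A − L̄C, 0], [0, 0, A − L̲C]] (via the change of coordinates (x, x̄, x̲) ↦ (x, x̄ − x, x − x̲)); consequently T is Schur stable if and only if the three matrices A + B(K̄ + K̲), A − L̄C, and A − L̲C are all Schur stable. -/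
open Matrix

/-- A `3 × 3` block matrix with square blocks of size `n`. -/
def blocks3 {n : ℕ} (M11 M12 M13 M21 M22 M23 M31 M32 M33 : Matrix (Fin n) (Fin n) ℝ) :
    Matrix (Fin n ⊕ (Fin n ⊕ Fin n)) (Fin n ⊕ (Fin n ⊕ Fin n)) ℝ :=
  Matrix.of fun i j =>
    Sum.elim
      (fun i₁ => Sum.elim (M11 i₁) (Sum.elim (M12 i₁) (M13 i₁)) j)
      (Sum.elim
        (fun i₂ => Sum.elim (M21 i₂) (Sum.elim (M22 i₂) (M23 i₂)) j)
        (fun i₃ => Sum.elim (M31 i₃) (Sum.elim (M32 i₃) (M33 i₃)) j)) i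

/-!
In the error coordinates `(x, x̄ - x, x - x̲)` the closed loop becomes block upper triangular.
A block triangular matrix `[[A, B], [0, D]]` has `det (z - ·) = det (z - A) * det (z - D)`, so its
spectrum is the union of the spectra of `A` and `D` and its spectral radius is the larger of theirs;
conjugation does not change the spectrum.
-/

lemma blocks3_eq_fromBlocks {n : ℕ}
    (M11 M12 M13 M21 M22 M23 M31 M32 M33 : Matrix (Fin n) (Fin n) ℝ) :
    blocks3 M11 M12 M13 M21 M22 M23 M31 M32 M33 =
      fromBlocks M11 (fromCols M12 M13) (fromRows M21 M31) (fromBlocks M22 M23 M32 M33) := by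
  ext (i | i | i) (j | j | j) <;> rfl

lemma blocks3_mul {n : ℕ} (A11 A12 A13 A21 A22 A23 A31 A32 A33
    B11 B12 B13 B21 B22 B23 B31 B32 B33 : Matrix (Fin n) (Fin n) ℝ) :
    blocks3 A11 A12 A13 A21 A22 A23 A31 A32 A33 * blocks3 B11 B12 B13 B21 B22 B23 B31 B32 B33 =
      blocks3 (A11 * B11 + A12 * B21 + A13 * B31) (A11 * B12 + A12 * B22 + A13 * B32)
        (A11 * B13 + A12 * B23 + A13 * B33)
        (A21 * B11 + A22 * B21 + A23 * B31) (A21 * B12 + A22 * B22 + A23 * B32)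
        (A21 * B13 + A22 * B23 + A23 * B33)
        (A31 * B11 + A32 * B21 + A33 * B31) (A31 * B12 + A32 * B22 + A33 * B32)
        (A31 * B13 + A32 * B23 + A33 * B33) := by
  ext (i | i | i) (j | j | j) <;>
    simp [blocks3, mul_apply, Fintype.sum_sum_type] <;> ring

lemma blocks3_one {n : ℕ} : blocks3 (1 : Matrix (Fin n) (Fin n) ℝ) 0 0 0 1 0 0 0 1 = 1 := by
  rw [blocks3_eq_fromBlocks, fromCols_zero, fromRows_zero, fromBlocks_one, fromBlocks_one]

lemma spectrum_fromBlocks_zero₂₁ {R : Type*} [CommRing R] {l m : Type*} [Fintype l] [Fintype m]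
    [DecidableEq l] [DecidableEq m] (A : Matrix l l R) (B : Matrix l m R) (D : Matrix m m R) :
    spectrum R (fromBlocks A B 0 D) = spectrum R A ∪ spectrum R D := by
  ext z
  simp only [Set.mem_union, spectrum.mem_iff, Algebra.algebraMap_eq_smul_one, ← fromBlocks_one,
    fromBlocks_smul, smul_zero, sub_eq_add_neg, fromBlocks_neg, fromBlocks_add, neg_zero, add_zero,
    isUnit_iff_isUnit_det, det_fromBlocks_zero₂₁, IsUnit.mul_iff, not_and_or]

lemma isSchur_fromBlocks_zero₂₁ {l m : Type*} [Fintype l] [Fintype m] [DecidableEq l]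
    [DecidableEq m] (A : Matrix l l ℝ) (B : Matrix l m ℝ) (D : Matrix m m ℝ) :
    IsSchur (fromBlocks A B 0 D) ↔ IsSchur A ∧ IsSchur D := by
  rw [IsSchur, fromBlocks_map, Matrix.map_zero _ (map_zero _), spectralRadius,
    spectrum_fromBlocks_zero₂₁, iSup_union, sup_lt_iff]
  rfl

lemma isSchur_conj_iff {ι : Type*} [Fintype ι] [DecidableEq ι] {S : Matrix ι ι ℝ}
    (hS : IsUnit S.det) (M : Matrix ι ι ℝ) : IsSchur (S * M * S⁻¹) ↔ IsSchur M := by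
  obtain ⟨u, rfl⟩ := (isUnit_iff_isUnit_det S).mpr hS
  let φ := (algebraMap ℝ ℂ).mapMatrix (m := ι)
  let v : (Matrix ι ι ℂ)ˣ := Units.map φ.toMonoidHom u
  have h : ((u : Matrix ι ι ℝ) * M * (u : Matrix ι ι ℝ)⁻¹).map (algebraMap ℝ ℂ) =
      (v : Matrix ι ι ℂ) * M.map (algebraMap ℝ ℂ) * (↑v⁻¹ : Matrix ι ι ℂ) := by
    rw [← coe_units_inv, ← map_inv, Units.coe_map, Units.coe_map]
    exact (map_mul φ _ _).trans (congrArg (· * _) (map_mul φ _ _))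
  rw [IsSchur, IsSchur, h, spectralRadius, spectrum.units_conjugate, spectralRadius]

/-- The extended closed-loop matrix `T` is similar (via the change of coordinates
`(x, x̄, x̲) ↦ (x, x̄ − x, x − x̲)`) to the block upper-triangular matrix `G`; consequently
`T` is Schur stable iff `A + B(K̄ + K̲)`, `A − L̄C` and `A − L̲C` are all Schur stable. -/
theorem extended_matrix_similar_and_schur_iff {n m p : ℕ}
    (A : Matrix (Fin n) (Fin n) ℝ) (B : Matrix (Fin n) (Fin m) ℝ)
    (C : Matrix (Fin p) (Fin n) ℝ)
    (Ku Kl : Matrix (Fin m) (Fin n) ℝ) (Lu Ll : Matrix (Fin n) (Fin p) ℝ) :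
    (∃ S : Matrix (Fin n ⊕ (Fin n ⊕ Fin n)) (Fin n ⊕ (Fin n ⊕ Fin n)) ℝ,
        IsUnit S.det ∧
        blocks3 (A + B * (Ku + Kl)) (B * Ku) (-(B * Kl))
                0 (A - Lu * C) 0
                0 0 (A - Ll * C) =
          S * blocks3 A (B * Ku) (B * Kl)
                (Lu * C) (A - Lu * C + B * Ku) (B * Kl)
                (Ll * C) (B * Ku) (A - Ll * C + B * Kl) * S⁻¹) ∧
    (IsSchur (blocks3 A (B * Ku) (B * Kl)
              (Lu * C) (A - Lu * C + B * Ku) (B * Kl)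
              (Ll * C) (B * Ku) (A - Ll * C + B * Kl)) ↔
      (IsSchur (A + B * (Ku + Kl)) ∧ IsSchur (A - Lu * C) ∧ IsSchur (A - Ll * C))) := by
  set S : Matrix (Fin n ⊕ (Fin n ⊕ Fin n)) (Fin n ⊕ (Fin n ⊕ Fin n)) ℝ :=
    blocks3 1 0 0 (-1) 1 0 1 0 (-1)
  have hS : S * blocks3 1 0 0 1 1 0 1 0 (-1) = 1 := by
    rw [blocks3_mul, ← blocks3_one]
    congr 1 <;> noncomm_ring
  have hSim : blocks3 (A + B * (Ku + Kl)) (B * Ku) (-(B * Kl)) 0 (A - Lu * C) 0 0 0 (A - Ll * C) =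
      S * blocks3 A (B * Ku) (B * Kl) (Lu * C) (A - Lu * C + B * Ku) (B * Kl)
        (Ll * C) (B * Ku) (A - Ll * C + B * Kl) * S⁻¹ := by
    rw [inv_eq_right_inv hS, blocks3_mul, blocks3_mul]
    congr 1 <;> simp only [Matrix.mul_add, Matrix.mul_sub, Matrix.mul_neg, Matrix.neg_mul,
      Matrix.mul_one, Matrix.one_mul, Matrix.mul_zero, Matrix.zero_mul] <;> abel
  refine ⟨⟨S, isUnit_det_of_right_inverse hS, hSim⟩, ?_⟩
  rw [← isSchur_conj_iff (isUnit_det_of_right_inverse hS), ← hSim, blocks3_eq_fromBlocks,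
    fromRows_zero, isSchur_fromBlocks_zero₂₁, isSchur_fromBlocks_zero₂₁]
end

section
/- Let A (n×n), B (n×m), C (p×n) be real matrices with A ≥ 0 entrywise. The following are equivalent: (i) there exist matrices K (m×n) and L (n×p) such that A − LC and A + BK are Schur stable, A − LC ≥ 0, A + BK ≥ 0, and LC ≥ 0 entrywise; (ii) there exist matrices K̄, K̲ (m×n) and L̄, L̲ (n×p) such that A + B(K̄ + K̲), A − L̄C, and A − L̲C are Schur stable, L̲C ≥ 0, and the six entrywise inequalities hold: A + B(K̄ + K̲) ≥ 0, A + BK̄ ≥ 0, BK̄ ≥ 0, A − L̄C ≥ 0, A − L̲C ≥ 0, and BK̄ + L̲C ≥ 0. -/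
open Matrix

/-- **Theorem 1.** For `A ≥ 0`, existence of classical gains `K`, `L` with `A − LC`,
`A + BK` Schur stable and `A − LC ≥ 0`, `A + BK ≥ 0`, `LC ≥ 0` is equivalent to existence
of upper/lower observer and feedback gains stabilizing the system with the
order-preserving set invariant (i.e. satisfying the six inequalities of Lemma 1,
`L̲C ≥ 0`, and Schur stability of the closed loop and both error dynamics). -/
theorem positive_observer_stabilization_iff {n m p : ℕ}
    (A : Matrix (Fin n) (Fin n) ℝ) (B : Matrix (Fin n) (Fin m) ℝ)
    (C : Matrix (Fin p) (Fin n) ℝ)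
    (hA : ∀ i j, 0 ≤ A i j) :
    (∃ (K : Matrix (Fin m) (Fin n) ℝ) (L : Matrix (Fin n) (Fin p) ℝ),
        IsSchur (A - L * C) ∧ IsSchur (A + B * K) ∧
        (∀ i j, 0 ≤ (A - L * C) i j) ∧
        (∀ i j, 0 ≤ (A + B * K) i j) ∧
        (∀ i j, 0 ≤ (L * C) i j)) ↔
    (∃ (Ku Kl : Matrix (Fin m) (Fin n) ℝ) (Lu Ll : Matrix (Fin n) (Fin p) ℝ),
        IsSchur (A + B * (Ku + Kl)) ∧ IsSchur (A - Lu * C) ∧ IsSchur (A - Ll * C) ∧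
        (∀ i j, 0 ≤ (Ll * C) i j) ∧
        (∀ i j, 0 ≤ (A + B * (Ku + Kl)) i j) ∧
        (∀ i j, 0 ≤ (A + B * Ku) i j) ∧
        (∀ i j, 0 ≤ (B * Ku) i j) ∧
        (∀ i j, 0 ≤ (A - Lu * C) i j) ∧
        (∀ i j, 0 ≤ (A - Ll * C) i j) ∧
        (∀ i j, 0 ≤ (B * Ku + Ll * C) i j)) := by
  constructor
  · rintro ⟨K, L, h1, h2, h3, h4, h5⟩
    refine ⟨0, K, L, L, ?_, h1, h1, h5, ?_, ?_, ?_, h3, h3, ?_⟩ <;>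
      simp only [Matrix.mul_zero, zero_add, add_zero] <;>
      first
        | exact h2
        | exact h4
        | exact hA
        | exact h5
        | intro i j; simp [Matrix.zero_apply]
  · rintro ⟨Ku, Kl, Lu, Ll, h1, h2, h3, h4, h5, h6, h7, h8, h9, h10⟩
    exact ⟨Ku + Kl, Ll, h3, h1, h9, h5, h4⟩
end

section
/- Let A (n×n), B (n×m), C (p×n), K̄, K̲ (m×n), L̄, L̲ (n×p), E (n×q) with E ≥ 0 entrywise, and F (p×r) be real matrices. Let G = [[A + B(K̄ + K̲), BK̄, −BK̲], [0, A − L̄C, 0], [0, 0, A − L̲C]], d = (E𝟙, L̄F𝟙 − E𝟙, E𝟙 − L̲F𝟙), and f(z) = Gz + d. Suppose the set X_e = {(x, ē, e̲) ∈ ℝ^{3n} : x ≥ 0, ē ≥ 0, 0 ≤ e̲ ≤ x} is invariant under f and there exists X* ∈ X_e such that for every z₀ ∈ X_e the iterates f^t(z₀) converge to X*. Then: A + B(K̄ + K̲), A − L̄C, and A − L̲C are Schur stable; the six inequalities A + B(K̄ + K̲) ≥ 0, A + BK̄ ≥ 0, BK̄ ≥ 0, A − L̄C ≥ 0, A − L̲C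 ≥ 0, BK̄ + L̲C ≥ 0 hold; and L̄F𝟙 − E𝟙 ≥ 0, E𝟙 − L̲F𝟙 ≥ 0, L̲F𝟙 ≥ 0. -/
/-!
Testing the invariance of `X_e` at `0` gives `d ∈ X_e`, and testing it at `(x, 0, 0)`,
`(0, x, 0)` and `(x, 0, x)` for all `x ≥ 0` gives the sign conditions on the blocks of `G`:
an affine map `x ↦ Mx + c` that is nonnegative on the whole orthant has `M ≥ 0`.
Since `f` is affine, `f^t z - f^t 0 = G^t z`; both iterates converge to `X*`, so `G^t z → 0` on
`X_e`. On the same test points `G^t` acts by the powers of the diagonal blocks, so these powers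
tend to zero, and then every eigenvalue `μ` has `μ^t → 0`, i.e. `|μ| < 1`.
-/

open Matrix Filter

/-- The constant term `d = (E𝟙, L̄F𝟙 − E𝟙, E𝟙 − L̲F𝟙)` of the expected error dynamics. -/
def noiseOffset {n p q r : ℕ}
    (Lu Ll : Matrix (Fin n) (Fin p) ℝ)
    (E : Matrix (Fin n) (Fin q) ℝ) (F : Matrix (Fin p) (Fin r) ℝ) :
    (Fin n → ℝ) × (Fin n → ℝ) × (Fin n → ℝ) :=
  (E *ᵥ (fun _ => (1 : ℝ)),
   (Lu * F) *ᵥ (fun _ => (1 : ℝ)) - E *ᵥ (fun _ => (1 : ℝ)),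
   E *ᵥ (fun _ => (1 : ℝ)) - (Ll * F) *ᵥ (fun _ => (1 : ℝ)))

/-- The affine expected error dynamics `f(z) = Gz + d`. -/
def noisyMap {n m p q r : ℕ}
    (A : Matrix (Fin n) (Fin n) ℝ) (B : Matrix (Fin n) (Fin m) ℝ)
    (C : Matrix (Fin p) (Fin n) ℝ)
    (Ku Kl : Matrix (Fin m) (Fin n) ℝ) (Lu Ll : Matrix (Fin n) (Fin p) ℝ)
    (E : Matrix (Fin n) (Fin q) ℝ) (F : Matrix (Fin p) (Fin r) ℝ)
    (z : (Fin n → ℝ) × (Fin n → ℝ) × (Fin n → ℝ)) :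
    (Fin n → ℝ) × (Fin n → ℝ) × (Fin n → ℝ) :=
  Gmap A B C Ku Kl Lu Ll z + noiseOffset Lu Ll E F

open Topology

theorem Matrix.norm_lt_one_of_mem_spectrum_of_tendsto_pow {𝕜 ι : Type*} [NormedField 𝕜]
    [Fintype ι] [DecidableEq ι] {M : Matrix ι ι 𝕜}
    (hM : Tendsto (fun t : ℕ => M ^ t) atTop (𝓝 0)) {μ : 𝕜} (hμ : μ ∈ spectrum 𝕜 M) :
    ‖μ‖ < 1 := by
  rw [← Matrix.spectrum_toLin', ← Module.End.hasEigenvalue_iff_mem_spectrum] at hμ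
  obtain ⟨v, hv⟩ := hμ.exists_hasEigenvector
  have hpow (t : ℕ) : M ^ t *ᵥ v = μ ^ t • v := by
    rw [← Matrix.toLin'_apply, ← hv.pow_apply t]
    exact congrArg (· v) (map_pow Matrix.toLinAlgEquiv' M t)
  have hlim : Tendsto (fun t : ℕ => μ ^ t • v) atTop (𝓝 0) := by
    simpa [Function.comp_def, hpow] using
      ((continuous_id.matrix_mulVec (continuous_const (y := v))).tendsto 0).comp hM
  obtain ⟨i, hi⟩ := Function.ne_iff.mp hv.2
  have := (tendsto_pi_nhds.1 hlim i).mul_const (v i)⁻¹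
  rw [← tendsto_pow_atTop_nhds_zero_iff_norm_lt_one]
  simpa [mul_assoc, mul_inv_cancel₀ hi] using this

theorem spectralRadius_lt_of_finite {𝕜 A : Type*} [NormedField 𝕜] [Ring A] [Algebra 𝕜 A]
    {a : A} (hfin : (spectrum 𝕜 a).Finite) {r : NNReal} (hr₀ : 0 < r)
    (hr : ∀ k ∈ spectrum 𝕜 a, ‖k‖₊ < r) : spectralRadius 𝕜 a < r := by
  rcases (spectrum 𝕜 a).eq_empty_or_nonempty with h | h
  · simpa [spectralRadius, h] using hr₀
  · exact (h.ciSup_lt_iff hfin).2 fun k hk => by exact_mod_cast hr k hk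

theorem isSchur_of_tendsto_pow {ι : Type*} [Fintype ι] [DecidableEq ι] {M : Matrix ι ι ℝ}
    (hM : Tendsto (fun t : ℕ => M ^ t) atTop (𝓝 0)) : IsSchur M := by
  have hMc : Tendsto (fun t : ℕ => M.map (algebraMap ℝ ℂ) ^ t) atTop (𝓝 0) := by
    convert ((continuous_id.matrix_map Complex.continuous_ofReal).tendsto 0).comp hM using 2 with t
    · exact (Matrix.map_pow M (algebraMap ℝ ℂ) t).symm
    · simp
  exact spectralRadius_lt_of_finite (Matrix.finite_spectrum _) one_pos fun k hk =>
    Matrix.norm_lt_one_of_mem_spectrum_of_tendsto_pow hMc hk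

theorem Matrix.tendsto_pow_of_tendsto_pow_mulVec {R ι : Type*} [Semiring R] [PartialOrder R]
    [ZeroLEOneClass R] [TopologicalSpace R] [Fintype ι] [DecidableEq ι] {M : Matrix ι ι R}
    (h : ∀ x : ι → R, 0 ≤ x → Tendsto (fun t : ℕ => M ^ t *ᵥ x) atTop (𝓝 0)) :
    Tendsto (fun t : ℕ => M ^ t) atTop (𝓝 0) :=
  tendsto_pi_nhds.2 fun i => tendsto_pi_nhds.2 fun j => by
    simpa [Matrix.mulVec_single_one] using
      tendsto_pi_nhds.1 (h (Pi.single j 1) (Pi.single_nonneg.2 zero_le_one)) i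

theorem nonneg_of_forall_nonneg_mul_add {a c : ℝ} (h : ∀ s, 0 ≤ s → 0 ≤ a * s + c) : 0 ≤ a := by
  by_contra! ha
  have := h ((|c| + 1) / -a) (div_nonneg (by positivity) (by linarith))
  rw [mul_div_assoc', div_neg, mul_div_cancel_left₀ _ ha.ne] at this
  linarith [le_abs_self c]

theorem Matrix.nonneg_of_forall_nonneg_mulVec_add {ι κ : Type*} [Fintype κ] [DecidableEq κ]
    {M : Matrix ι κ ℝ} {c : ι → ℝ} (h : ∀ x, 0 ≤ x → 0 ≤ M *ᵥ x + c) (i : ι) (j : κ) :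
    0 ≤ M i j :=
  nonneg_of_forall_nonneg_mul_add fun s hs => by
    simpa [mul_comm] using h (Pi.single j s) (Pi.single_nonneg.2 hs) i

theorem Function.iterate_sub_iterate_of_eq_add_const {E : Type*} [AddCommGroup E]
    {f g : E → E} {d : E} (hf : ∀ z, f z = g z + d) (hg : ∀ z w, g (z - w) = g z - g w)
    (t : ℕ) (z w : E) : f^[t] z - f^[t] w = g^[t] (z - w) := by
  induction t with
  | zero => rfl
  | succ t ih =>
    rw [Function.iterate_succ_apply', Function.iterate_succ_apply',
      Function.iterate_succ_apply', ← ih, hf, hf, add_sub_add_right_eq_sub, hg]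

theorem mk_mem_errorCone {n : ℕ} {x y w : Fin n → ℝ} (hx : 0 ≤ x) (hy : 0 ≤ y) (hw : 0 ≤ w)
    (hwx : w ≤ x) : (x, y, w) ∈ errorCone n :=
  ⟨hx, hy, hw, hwx⟩

theorem zero_mem_errorCone (n : ℕ) : 0 ∈ errorCone n :=
  mk_mem_errorCone le_rfl le_rfl le_rfl le_rfl

section ExpectedErrorDynamics

variable {n m p q r : ℕ}
    {A : Matrix (Fin n) (Fin n) ℝ} {B : Matrix (Fin n) (Fin m) ℝ} {C : Matrix (Fin p) (Fin n) ℝ}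
    {Ku Kl : Matrix (Fin m) (Fin n) ℝ} {Lu Ll : Matrix (Fin n) (Fin p) ℝ}
    {E : Matrix (Fin n) (Fin q) ℝ} {F : Matrix (Fin p) (Fin r) ℝ}

theorem Gmap_sub (z w : (Fin n → ℝ) × (Fin n → ℝ) × (Fin n → ℝ)) :
    Gmap A B C Ku Kl Lu Ll (z - w) = Gmap A B C Ku Kl Lu Ll z - Gmap A B C Ku Kl Lu Ll w := by
  simp only [Gmap, Prod.fst_sub, Prod.snd_sub, Matrix.mulVec_sub, Prod.mk_sub_mk]
  congr 1
  abel

theorem Gmap_iterate_mk_zero_zero (x : Fin n → ℝ) (t : ℕ) :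
    (Gmap A B C Ku Kl Lu Ll)^[t] (x, 0, 0) = ((A + B * (Ku + Kl)) ^ t *ᵥ x, 0, 0) := by
  induction t with
  | zero => simp
  | succ t ih =>
    rw [Function.iterate_succ_apply', ih]
    simp [Gmap, Matrix.mulVec_mulVec, ← pow_succ']

theorem Gmap_iterate_snd_fst (z : (Fin n → ℝ) × (Fin n → ℝ) × (Fin n → ℝ)) (t : ℕ) :
    ((Gmap A B C Ku Kl Lu Ll)^[t] z).2.1 = (A - Lu * C) ^ t *ᵥ z.2.1 := by
  induction t with
  | zero => simp
  | succ t ih =>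
    rw [Function.iterate_succ_apply']
    change (A - Lu * C) *ᵥ _ = _
    rw [ih, Matrix.mulVec_mulVec, ← pow_succ']

theorem Gmap_iterate_snd_snd (z : (Fin n → ℝ) × (Fin n → ℝ) × (Fin n → ℝ)) (t : ℕ) :
    ((Gmap A B C Ku Kl Lu Ll)^[t] z).2.2 = (A - Ll * C) ^ t *ᵥ z.2.2 := by
  induction t with
  | zero => simp
  | succ t ih =>
    rw [Function.iterate_succ_apply']
    change (A - Ll * C) *ᵥ _ = _
    rw [ih, Matrix.mulVec_mulVec, ← pow_succ']

theorem tendsto_iterate_Gmap_zero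
    (hconv : ∃ Xstar ∈ errorCone n, ∀ z₀ ∈ errorCone n,
      Tendsto (fun t => (noisyMap A B C Ku Kl Lu Ll E F)^[t] z₀) atTop (𝓝 Xstar))
    {z : (Fin n → ℝ) × (Fin n → ℝ) × (Fin n → ℝ)} (hz : z ∈ errorCone n) :
    Tendsto (fun t => (Gmap A B C Ku Kl Lu Ll)^[t] z) atTop (𝓝 0) := by
  obtain ⟨Xstar, -, hlim⟩ := hconv
  have hsub := Function.iterate_sub_iterate_of_eq_add_const
    (f := noisyMap A B C Ku Kl Lu Ll E F) (fun _ => rfl) Gmap_sub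
  simpa [hsub] using (hlim z hz).sub (hlim 0 (zero_mem_errorCone n))

theorem isSchur_closedLoop_of_tendsto (hG : ∀ z ∈ errorCone n,
      Tendsto (fun t => (Gmap A B C Ku Kl Lu Ll)^[t] z) atTop (𝓝 0)) :
    IsSchur (A + B * (Ku + Kl)) :=
  isSchur_of_tendsto_pow <| Matrix.tendsto_pow_of_tendsto_pow_mulVec fun x hx => by
    simpa [Gmap_iterate_mk_zero_zero] using
      (hG (x, 0, 0) (mk_mem_errorCone hx le_rfl le_rfl hx)).fst_nhds

theorem isSchur_upperObserver_of_tendsto (hG : ∀ z ∈ errorCone n,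
      Tendsto (fun t => (Gmap A B C Ku Kl Lu Ll)^[t] z) atTop (𝓝 0)) :
    IsSchur (A - Lu * C) :=
  isSchur_of_tendsto_pow <| Matrix.tendsto_pow_of_tendsto_pow_mulVec fun x hx => by
    simpa [Gmap_iterate_snd_fst] using
      (hG (0, x, 0) (mk_mem_errorCone le_rfl hx le_rfl le_rfl)).snd_nhds.fst_nhds

theorem isSchur_lowerObserver_of_tendsto (hG : ∀ z ∈ errorCone n,
      Tendsto (fun t => (Gmap A B C Ku Kl Lu Ll)^[t] z) atTop (𝓝 0)) :
    IsSchur (A - Ll * C) :=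
  isSchur_of_tendsto_pow <| Matrix.tendsto_pow_of_tendsto_pow_mulVec fun x hx => by
    simpa [Gmap_iterate_snd_snd] using
      (hG (x, 0, x) (mk_mem_errorCone hx le_rfl hx le_rfl)).snd_nhds.snd_nhds

theorem noiseOffset_mem_errorCone
    (hinv : Set.MapsTo (noisyMap A B C Ku Kl Lu Ll E F) (errorCone n) (errorCone n)) :
    noiseOffset Lu Ll E F ∈ errorCone n := by
  simpa [noisyMap, Gmap, Prod.mk_zero_zero] using hinv (zero_mem_errorCone n)

theorem closedLoop_nonneg_of_mapsTo
    (hinv : Set.MapsTo (noisyMap A B C Ku Kl Lu Ll E F) (errorCone n) (errorCone n))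
    (i j : Fin n) : 0 ≤ (A + B * (Ku + Kl)) i j :=
  Matrix.nonneg_of_forall_nonneg_mulVec_add (c := E *ᵥ fun _ => 1) (fun x hx => by
    simpa [Pi.le_def, noisyMap, Gmap, noiseOffset] using
      (hinv (mk_mem_errorCone hx le_rfl le_rfl hx)).1) i j

theorem mul_Ku_nonneg_of_mapsTo
    (hinv : Set.MapsTo (noisyMap A B C Ku Kl Lu Ll E F) (errorCone n) (errorCone n))
    (i j : Fin n) : 0 ≤ (B * Ku) i j :=
  Matrix.nonneg_of_forall_nonneg_mulVec_add (c := E *ᵥ fun _ => 1) (fun x hx => by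
    simpa [Pi.le_def, noisyMap, Gmap, noiseOffset] using
      (hinv (mk_mem_errorCone le_rfl hx le_rfl le_rfl)).1) i j

theorem upperObserver_nonneg_of_mapsTo
    (hinv : Set.MapsTo (noisyMap A B C Ku Kl Lu Ll E F) (errorCone n) (errorCone n))
    (i j : Fin n) : 0 ≤ (A - Lu * C) i j :=
  Matrix.nonneg_of_forall_nonneg_mulVec_add (fun x hx => by
    simpa [Pi.le_def, noisyMap, Gmap, noiseOffset] using
      (hinv (mk_mem_errorCone le_rfl hx le_rfl le_rfl)).2.1) i j

theorem lowerObserver_nonneg_of_mapsTo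
    (hinv : Set.MapsTo (noisyMap A B C Ku Kl Lu Ll E F) (errorCone n) (errorCone n))
    (i j : Fin n) : 0 ≤ (A - Ll * C) i j :=
  Matrix.nonneg_of_forall_nonneg_mulVec_add (fun x hx => by
    simpa [Pi.le_def, noisyMap, Gmap, noiseOffset] using
      (hinv (mk_mem_errorCone hx le_rfl hx le_rfl)).2.2.1) i j

theorem mul_Ku_add_mul_C_nonneg_of_mapsTo
    (hinv : Set.MapsTo (noisyMap A B C Ku Kl Lu Ll E F) (errorCone n) (errorCone n))
    (i j : Fin n) : 0 ≤ (B * Ku + Ll * C) i j := by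
  have hmat : B * Ku + Ll * C = A + B * (Ku + Kl) - B * Kl - (A - Ll * C) := by
    rw [Matrix.mul_add]
    abel
  refine Matrix.nonneg_of_forall_nonneg_mulVec_add (c := (Ll * F) *ᵥ fun _ => 1)
    (fun x hx k => ?_) i j
  have h := (hinv (mk_mem_errorCone hx le_rfl hx le_rfl)).2.2.2 k
  simp only [noisyMap, Gmap, noiseOffset, mulVec_zero, add_zero, Prod.mk_add_mk, zero_add,
    sub_mulVec, Pi.add_apply, Pi.sub_apply] at h
  simp only [Pi.zero_apply, hmat, sub_mulVec, Pi.add_apply, Pi.sub_apply]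
  linarith

end ExpectedErrorDynamics

theorem ineqs_of_noisy_positive_observer_general {n m p q r : ℕ}
    (A : Matrix (Fin n) (Fin n) ℝ) (B : Matrix (Fin n) (Fin m) ℝ)
    (C : Matrix (Fin p) (Fin n) ℝ)
    (Ku Kl : Matrix (Fin m) (Fin n) ℝ) (Lu Ll : Matrix (Fin n) (Fin p) ℝ)
    (E : Matrix (Fin n) (Fin q) ℝ) (F : Matrix (Fin p) (Fin r) ℝ)
    (hinv : ∀ z ∈ errorCone n, noisyMap A B C Ku Kl Lu Ll E F z ∈ errorCone n)
    (hconv : ∃ Xstar ∈ errorCone n, ∀ z₀ ∈ errorCone n,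
      Tendsto (fun t => (noisyMap A B C Ku Kl Lu Ll E F)^[t] z₀) atTop (nhds Xstar)) :
    IsSchur (A + B * (Ku + Kl)) ∧ IsSchur (A - Lu * C) ∧ IsSchur (A - Ll * C) ∧
    (∀ i j, 0 ≤ (A + B * (Ku + Kl)) i j) ∧
    (∀ i j, 0 ≤ (A + B * Ku) i j) ∧
    (∀ i j, 0 ≤ (B * Ku) i j) ∧
    (∀ i j, 0 ≤ (A - Lu * C) i j) ∧
    (∀ i j, 0 ≤ (A - Ll * C) i j) ∧
    (∀ i j, 0 ≤ (B * Ku + Ll * C) i j) ∧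
    (∀ i, 0 ≤ ((Lu * F) *ᵥ (fun _ => (1 : ℝ)) - E *ᵥ (fun _ => (1 : ℝ))) i) ∧
    (∀ i, 0 ≤ (E *ᵥ (fun _ => (1 : ℝ)) - (Ll * F) *ᵥ (fun _ => (1 : ℝ))) i) ∧
    (∀ i, 0 ≤ ((Ll * F) *ᵥ (fun _ => (1 : ℝ))) i) := by
  have hG := fun z (hz : z ∈ errorCone n) => tendsto_iterate_Gmap_zero hconv hz
  have hd := noiseOffset_mem_errorCone hinv
  have hLlC := lowerObserver_nonneg_of_mapsTo hinv
  have hKuLl := mul_Ku_add_mul_C_nonneg_of_mapsTo hinv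
  refine ⟨isSchur_closedLoop_of_tendsto hG, isSchur_upperObserver_of_tendsto hG,
    isSchur_lowerObserver_of_tendsto hG, closedLoop_nonneg_of_mapsTo hinv, fun i j => ?_,
    mul_Ku_nonneg_of_mapsTo hinv, upperObserver_nonneg_of_mapsTo hinv, hLlC, hKuLl,
    hd.2.1, hd.2.2.1, fun i => by simpa [noiseOffset] using hd.2.2.2 i⟩
  rw [show A + B * Ku = (A - Ll * C) + (B * Ku + Ll * C) by abel, Matrix.add_apply]
  exact add_nonneg (hLlC i j) (hKuLl i j)

/-- **Necessity in Theorem 2.** If the cone `X_e` is invariant under the affine expected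
error dynamics `f(z) = Gz + d` and all iterates started in `X_e` converge to a fixed
point `X* ∈ X_e`, then the three diagonal blocks are Schur stable and the six
inequalities of Lemma 1 as well as the three noise inequalities hold. -/
theorem ineqs_of_noisy_positive_observer {n m p q r : ℕ}
    (A : Matrix (Fin n) (Fin n) ℝ) (B : Matrix (Fin n) (Fin m) ℝ)
    (C : Matrix (Fin p) (Fin n) ℝ)
    (Ku Kl : Matrix (Fin m) (Fin n) ℝ) (Lu Ll : Matrix (Fin n) (Fin p) ℝ)
    (E : Matrix (Fin n) (Fin q) ℝ) (F : Matrix (Fin p) (Fin r) ℝ)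
    (hE : ∀ i j, 0 ≤ E i j)
    (hinv : ∀ z ∈ errorCone n, noisyMap A B C Ku Kl Lu Ll E F z ∈ errorCone n)
    (hconv : ∃ Xstar ∈ errorCone n, ∀ z₀ ∈ errorCone n,
      Tendsto (fun t => (noisyMap A B C Ku Kl Lu Ll E F)^[t] z₀) atTop (nhds Xstar)) :
    IsSchur (A + B * (Ku + Kl)) ∧ IsSchur (A - Lu * C) ∧ IsSchur (A - Ll * C) ∧
    (∀ i j, 0 ≤ (A + B * (Ku + Kl)) i j) ∧
    (∀ i j, 0 ≤ (A + B * Ku) i j) ∧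
    (∀ i j, 0 ≤ (B * Ku) i j) ∧
    (∀ i j, 0 ≤ (A - Lu * C) i j) ∧
    (∀ i j, 0 ≤ (A - Ll * C) i j) ∧
    (∀ i j, 0 ≤ (B * Ku + Ll * C) i j) ∧
    (∀ i, 0 ≤ ((Lu * F) *ᵥ (fun _ => (1 : ℝ)) - E *ᵥ (fun _ => (1 : ℝ))) i) ∧
    (∀ i, 0 ≤ (E *ᵥ (fun _ => (1 : ℝ)) - (Ll * F) *ᵥ (fun _ => (1 : ℝ))) i) ∧
    (∀ i, 0 ≤ ((Ll * F) *ᵥ (fun _ => (1 : ℝ))) i) :=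
  ineqs_of_noisy_positive_observer_general A B C Ku Kl Lu Ll E F hinv hconv
end
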